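/- In a finite DTMC, for any state s ∉ B and any subset E of its outgoing transitions, the quantity U(s) := L(s) + (1 − Σ_{(s,t)∈E} P(s,t)), where L(s) is the partial lower bound computed from E using upper bounds U_p(t) ≥ Pr[◇B | t] on the targets, is an upper bound on Pr[◇B | s]; i.e., assuming all undiscovered transition mass leads directly to B yields a sound upper bound. -/

import Mathlib

/-!
The hitting probabilities `hitProb P B` are the limit of the probabilities of hitting `B` within
`n` steps, and this limit is itself a solution of the hitting equations. Hence at `s ∉ B`,
`hitProb P B s = ∑ u, P s u * hitProb P B u`. Split this sum along `E`: on `E` use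
`hitProb = 1` on `B` and `hitProb ≤ Up` off `B`; off `E` use `hitProb ≤ 1` (the constant `1` solves
the equations), so that part is at most the missing mass `1 - ∑ t ∈ E, P s t`.
-/

noncomputable section
attribute [local instance] Classical.propDecidable

variable {S : Type*}

/-- Probability of a finite path: product of transition probabilities. -/
def pathProb (P : S → S → ℝ) : List S → ℝ
  | [] => 1
  | [_] => 1
  | a :: b :: r => P a b * pathProb P (b :: r)

/-- A danger path from `s` into `B`: nonempty, starts at `s`, ends in `B`,
all states except the last outside `B`. -/
def IsDangerPath (T : S → S → Prop) (B : Set S) (s : S) (l : List S) : Prop :=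
  l.Chain' T ∧ ∃ h : l ≠ [], l.head h = s ∧ l.getLast h ∈ B ∧ ∀ x ∈ l.dropLast, x ∉ B

/-- Reachability in at most `n` steps. -/
def ReachN (T : S → S → Prop) : ℕ → S → S → Prop
  | 0, s, u => s = u
  | n + 1, s, u => s = u ∨ ∃ t, T s t ∧ ReachN T n t u

/-- States that can reach `X` within `j` steps. -/
def PreN (T : S → S → Prop) (X : Set S) (j : ℕ) : Set S :=
  {s | ∃ b ∈ X, ReachN T j s b}

/-- States reachable from `I` within `i` steps. -/
def PostN (T : S → S → Prop) (I : Set S) (i : ℕ) : Set S :=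
  {s | ∃ a ∈ I, ReachN T i a s}

/-- States that can reach `X` (backward reachable set). -/
def PreStar (T : S → S → Prop) (X : Set S) : Set S :=
  {s | ∃ b ∈ X, Relation.ReflTransGen T s b}

/-- States reachable from `I`. -/
def PostStar (T : S → S → Prop) (I : Set S) : Set S :=
  {s | ∃ a ∈ I, Relation.ReflTransGen T a s}

/-- The reachability (hitting) probability `Pr[◇B | s]`, characterized as the least
nonnegative solution of the standard fixed-point equations. -/
def hitProb [Fintype S] (P : S → S → ℝ) (B : Set S) (s : S) : ℝ :=
  sInf {r : ℝ | ∃ x : S → ℝ, (∀ t, 0 ≤ x t) ∧ (∀ t ∈ B, x t = 1) ∧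
    (∀ t ∉ B, x t = ∑ u, P t u * x u) ∧ r = x s}

section HitProb

variable [Fintype S] (P : S → S → ℝ) (B : Set S)

def IsHitSolution (x : S → ℝ) : Prop :=
  (∀ t, 0 ≤ x t) ∧ (∀ t ∈ B, x t = 1) ∧ ∀ t ∉ B, x t = ∑ u, P t u * x u

def hitProbWithin : ℕ → S → ℝ
  | 0 => fun t => if t ∈ B then 1 else 0
  | n + 1 => fun t => if t ∈ B then 1 else ∑ u, P t u * hitProbWithin n u

variable {P B}

theorem isHitSolution_one (hrow : ∀ s, ∑ t, P s t = 1) : IsHitSolution P B 1 :=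
  ⟨fun _ => zero_le_one, fun _ _ => rfl, fun t _ => by simp [hrow t]⟩

theorem hitProb_le_of_isHitSolution {x : S → ℝ} (hx : IsHitSolution P B x) (t : S) :
    hitProb P B t ≤ x t :=
  csInf_le ⟨0, by rintro r ⟨y, hy0, -, -, rfl⟩; exact hy0 t⟩ ⟨x, hx.1, hx.2.1, hx.2.2, rfl⟩

theorem hitProbWithin_nonneg (hnn : ∀ s t, 0 ≤ P s t) (n : ℕ) (t : S) :
    0 ≤ hitProbWithin P B n t := by
  induction n generalizing t with
  | zero => unfold hitProbWithin; split_ifs <;> norm_num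
  | succ n ih =>
    unfold hitProbWithin
    split_ifs
    · exact zero_le_one
    · exact Finset.sum_nonneg fun u _ => mul_nonneg (hnn t u) (ih u)

theorem hitProbWithin_le_of_isHitSolution (hnn : ∀ s t, 0 ≤ P s t) {x : S → ℝ}
    (hx : IsHitSolution P B x) (n : ℕ) (t : S) : hitProbWithin P B n t ≤ x t := by
  obtain ⟨hx0, hxB, hxF⟩ := hx
  induction n generalizing t with
  | zero =>
    unfold hitProbWithin
    split_ifs with ht
    · exact (hxB t ht).ge
    · exact hx0 t
  | succ n ih =>
    unfold hitProbWithin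
    split_ifs with ht
    · exact (hxB t ht).ge
    · rw [hxF t ht]
      exact Finset.sum_le_sum fun u _ => mul_le_mul_of_nonneg_left (ih u) (hnn t u)

theorem hitProbWithin_le_succ (hnn : ∀ s t, 0 ≤ P s t) (n : ℕ) (t : S) :
    hitProbWithin P B n t ≤ hitProbWithin P B (n + 1) t := by
  induction n generalizing t with
  | zero =>
    unfold hitProbWithin
    split_ifs
    · exact le_rfl
    · exact Finset.sum_nonneg fun u _ => mul_nonneg (hnn t u) (hitProbWithin_nonneg hnn 0 u)
  | succ n ih =>
    unfold hitProbWithin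
    split_ifs
    · exact le_rfl
    · exact Finset.sum_le_sum fun u _ => mul_le_mul_of_nonneg_left (ih u) (hnn t u)

theorem tendsto_hitProbWithin (hnn : ∀ s t, 0 ≤ P s t) (hrow : ∀ s, ∑ t, P s t = 1) (t : S) :
    Filter.Tendsto (hitProbWithin P B · t) Filter.atTop (nhds (⨆ n, hitProbWithin P B n t)) :=
  tendsto_atTop_ciSup (monotone_nat_of_le_succ fun n => hitProbWithin_le_succ hnn n t)
    ⟨1, by
      rintro r ⟨n, rfl⟩
      exact hitProbWithin_le_of_isHitSolution hnn (isHitSolution_one hrow) n t⟩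

theorem isHitSolution_iSup_hitProbWithin (hnn : ∀ s t, 0 ≤ P s t)
    (hrow : ∀ s, ∑ t, P s t = 1) : IsHitSolution P B fun t => ⨆ n, hitProbWithin P B n t := by
  have hlim := tendsto_hitProbWithin (B := B) hnn hrow
  refine ⟨fun t => ?_, fun t ht => ?_, fun t ht => ?_⟩
  · exact ge_of_tendsto' (hlim t) (hitProbWithin_nonneg hnn · t)
  · have hconst : ∀ n, hitProbWithin P B n t = 1 := by
      intro n; cases n <;> simp [hitProbWithin, ht]
    simp [hconst]
  · have hstep : (hitProbWithin P B · t) ∘ (· + 1) = fun n => ∑ u, P t u * hitProbWithin P B n u :=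
      funext fun n => by simp [hitProbWithin, ht]
    have hshift := (hlim t).comp (Filter.tendsto_add_atTop_nat 1)
    rw [hstep] at hshift
    exact tendsto_nhds_unique hshift (tendsto_finsetSum _ fun u _ => (hlim u).const_mul _)

theorem hitProb_eq_iSup_hitProbWithin (hnn : ∀ s t, 0 ≤ P s t) (hrow : ∀ s, ∑ t, P s t = 1)
    (t : S) : hitProb P B t = ⨆ n, hitProbWithin P B n t := by
  have hsol := isHitSolution_iSup_hitProbWithin (B := B) hnn hrow
  refine IsLeast.csInf_eq ⟨⟨_, hsol.1, hsol.2.1, hsol.2.2, rfl⟩, ?_⟩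
  rintro r ⟨x, hx0, hxB, hxF, rfl⟩
  exact ciSup_le fun n => hitProbWithin_le_of_isHitSolution hnn ⟨hx0, hxB, hxF⟩ n t

theorem isHitSolution_hitProb (hnn : ∀ s t, 0 ≤ P s t) (hrow : ∀ s, ∑ t, P s t = 1) :
    IsHitSolution P B (hitProb P B) := by
  rw [funext (hitProb_eq_iSup_hitProbWithin hnn hrow)]
  exact isHitSolution_iSup_hitProbWithin hnn hrow

end HitProb

theorem sum_compl_mul_le_one_sub {ι : Type*} [Fintype ι] [DecidableEq ι] {p x : ι → ℝ}
    (hp : ∀ i, 0 ≤ p i) (hsum : ∑ i, p i = 1) (hx : ∀ i, x i ≤ 1) (E : Finset ι) :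
    ∑ i ∈ Eᶜ, p i * x i ≤ 1 - ∑ i ∈ E, p i := by
  calc ∑ i ∈ Eᶜ, p i * x i ≤ ∑ i ∈ Eᶜ, p i :=
        Finset.sum_le_sum fun i _ => mul_le_of_le_one_right (hp i) (hx i)
    _ = 1 - ∑ i ∈ E, p i := by rw [← hsum, ← Finset.sum_add_sum_compl E p]; ring

theorem stmt4_general [Fintype S] (P : S → S → ℝ)
    (hnn : ∀ s t, 0 ≤ P s t) (hrow : ∀ s, ∑ t, P s t = 1)
    (B : Set S) (s : S) (hs : s ∉ B)
    (E : Finset S)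
    (Up : S → ℝ) (hU : ∀ t ∈ E, hitProb P B t ≤ Up t) :
    hitProb P B s ≤
      (∑ t ∈ E, if t ∉ B then P s t * Up t else 0)
        + (∑ t ∈ E, if t ∈ B then P s t else 0)
        + (1 - ∑ t ∈ E, P s t) := by
  have hsol := isHitSolution_hitProb (B := B) hnn hrow
  have hle_one : ∀ t, hitProb P B t ≤ 1 := hitProb_le_of_isHitSolution (isHitSolution_one hrow)
  have hdiscovered : ∑ t ∈ E, P s t * hitProb P B t
      ≤ ∑ t ∈ E, ((if t ∉ B then P s t * Up t else 0) + if t ∈ B then P s t else 0) := by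
    refine Finset.sum_le_sum fun t ht => ?_
    by_cases htB : t ∈ B
    · simp [htB, hsol.2.1 t htB]
    · simpa [htB] using mul_le_mul_of_nonneg_left (hU t ht) (hnn s t)
  have hundiscovered := sum_compl_mul_le_one_sub (hnn s) (hrow s) hle_one E
  rw [hsol.2.2 s hs, ← Finset.sum_add_sum_compl E, ← Finset.sum_add_distrib]
  linarith

/-- treating all undiscovered transition mass as leading directly to `B`
yields a sound upper bound on `Pr[◇B | s]`. -/
theorem stmt4 [Fintype S] (P : S → S → ℝ)
    (hnn : ∀ s t, 0 ≤ P s t) (hrow : ∀ s, ∑ t, P s t = 1)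
    (B : Set S) (s : S) (hs : s ∉ B)
    (E : Finset S) (hE : ∀ t ∈ E, 0 < P s t)
    (Up : S → ℝ) (hU : ∀ t ∈ E, hitProb P B t ≤ Up t) :
    hitProb P B s ≤
      (∑ t ∈ E, if t ∉ B then P s t * Up t else 0)
        + (∑ t ∈ E, if t ∈ B then P s t else 0)
        + (1 - ∑ t ∈ E, P s t) :=
  stmt4_general P hnn hrow B s hs E Up hU
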